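/- arXiv:1003.3301 — 3 statements merged into one kernel-verified Lean document; each statement's English description precedes it below -/
import Mathlib

section
/- Let x1, x2 be points in R^d with 0 < ||x1 - x2|| < 2, and let (x1', x2') be as in the exclusion projection: x1' = x1 + ((2 - ||x1-x2||)/(2||x1-x2||))(x1 - x2), x2' = x2 - ((2 - ||x1-x2||)/(2||x1-x2||))(x1 - x2). Then for any pair (y1, y2) in R^d × R^d with ||y1 - y2|| ≥ 2, we have ||x1 - x1'||^2 + ||x2 - x2'||^2 ≤ ||x1 - y1||^2 + ||x2 - y2||^2. -/
/-!
Both points move by the same distance `δ ≤ (2 - ‖x₁ - x₂‖) / 2`, so the left-hand side is `2δ²`.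
For any admissible pair the triangle inequality gives
`2 - ‖x₁ - x₂‖ ≤ ‖y₁ - y₂‖ - ‖x₁ - x₂‖ ≤ ‖x₁ - y₁‖ + ‖x₂ - y₂‖`, and `(a + b)² ≤ 2 (a² + b²)`
finishes.
-/

lemma norm_sub_sub_norm_sub_le_add {E : Type*} [SeminormedAddCommGroup E] (x₁ x₂ y₁ y₂ : E) :
    ‖y₁ - y₂‖ - ‖x₁ - x₂‖ ≤ ‖x₁ - y₁‖ + ‖x₂ - y₂‖ := by
  have := dist_triangle4_left x₁ x₂ y₁ y₂
  simp only [dist_eq_norm] at this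
  linarith

lemma div_two_mul_mul_le_div_two {s r : ℝ} (hs : 0 ≤ s) : s / (2 * r) * r ≤ s / 2 := by
  rcases eq_or_ne r 0 with rfl | hr
  · simpa using div_nonneg hs zero_le_two
  · rw [div_mul_eq_mul_div, mul_div_mul_right _ _ hr]

lemma two_mul_sq_le_sq_add_sq {δ a b : ℝ} (hδ : 0 ≤ δ) (h : 2 * δ ≤ a + b) :
    2 * δ ^ 2 ≤ a ^ 2 + b ^ 2 := by
  nlinarith [add_sq_le (a := a) (b := b)]

theorem exclusion_projection_is_projection_general {d : ℕ}
    (x1 x2 : EuclideanSpace ℝ (Fin d))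
    (h2 : ‖x1 - x2‖ < 2)
    (x1' x2' : EuclideanSpace ℝ (Fin d))
    (hx1' : x1' = x1 + ((2 - ‖x1 - x2‖) / (2 * ‖x1 - x2‖)) • (x1 - x2))
    (hx2' : x2' = x2 - ((2 - ‖x1 - x2‖) / (2 * ‖x1 - x2‖)) • (x1 - x2))
    (y1 y2 : EuclideanSpace ℝ (Fin d)) (hy : 2 ≤ ‖y1 - y2‖) :
    ‖x1 - x1'‖ ^ 2 + ‖x2 - x2'‖ ^ 2 ≤ ‖x1 - y1‖ ^ 2 + ‖x2 - y2‖ ^ 2 := by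
  set r := ‖x1 - x2‖
  set c := (2 - r) / (2 * r)
  have hc : 0 ≤ c := div_nonneg (by linarith) (by positivity)
  have hx1 : ‖x1 - x1'‖ = c * r := by
    rw [hx1', sub_add_cancel_left, norm_neg, norm_smul, Real.norm_of_nonneg hc]
  have hx2 : ‖x2 - x2'‖ = c * r := by
    rw [hx2', sub_sub_cancel, norm_smul, Real.norm_of_nonneg hc]
  have hcr : c * r ≤ (2 - r) / 2 := div_two_mul_mul_le_div_two (by linarith)
  have hy' := norm_sub_sub_norm_sub_le_add x1 x2 y1 y2
  rw [hx1, hx2, ← two_mul]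
  exact two_mul_sq_le_sq_add_sq (by positivity) (by linarith)

theorem exclusion_projection_is_projection {d : ℕ}
    (x1 x2 : EuclideanSpace ℝ (Fin d))
    (h0 : 0 < ‖x1 - x2‖) (h2 : ‖x1 - x2‖ < 2)
    (x1' x2' : EuclideanSpace ℝ (Fin d))
    (hx1' : x1' = x1 + ((2 - ‖x1 - x2‖) / (2 * ‖x1 - x2‖)) • (x1 - x2))
    (hx2' : x2' = x2 - ((2 - ‖x1 - x2‖) / (2 * ‖x1 - x2‖)) • (x1 - x2))
    (y1 y2 : EuclideanSpace ℝ (Fin d)) (hy : 2 ≤ ‖y1 - y2‖) :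
    ‖x1 - x1'‖ ^ 2 + ‖x2 - x2'‖ ^ 2 ≤ ‖x1 - y1‖ ^ 2 + ‖x2 - y2‖ ^ 2 :=
  exclusion_projection_is_projection_general x1 x2 h2 x1' x2' hx1' hx2' y1 y2 hy
end

section
/- The density of the pentatope packing given by 4 pentatopes of edge length ||r1 - r2|| in a unit cell of volume |det M0| (with M0 as specified) equals 128/219, i.e., 4·vol(K1)/|det M0| = 128/219, where vol(K1) is the volume of the regular 4-simplex with vertices r1,…,r5. -/
noncomputable def pentR1 : Fin 4 → ℝ := fun _ => Real.sqrt 5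
def pentR2 : Fin 4 → ℝ := ![3, -1, -1, -1]
def pentR3 : Fin 4 → ℝ := ![-1, 3, -1, -1]
def pentR4 : Fin 4 → ℝ := ![-1, -1, 3, -1]
def pentR5 : Fin 4 → ℝ := ![-1, -1, -1, 3]

/-- Edge matrix of the regular 4-simplex `K1 = conv{r1,…,r5}`. -/
noncomputable def pentD : Matrix (Fin 4) (Fin 4) ℝ :=
  Matrix.of ![pentR2 - pentR1, pentR3 - pentR1, pentR4 - pentR1, pentR5 - pentR1]

/-- Generating matrix of the lattice of the pentatope packing. -/
noncomputable def pentM0 : Matrix (Fin 4) (Fin 4) ℝ :=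
  (1 / 4 : ℝ) • Matrix.of ![![-6, 10, -6, 2], ![-8, -4, 4, 8], ![-7, 5, 9, -7], ![1, -7, 9, -3]] +
  (Real.sqrt 5 / 4) • Matrix.of ![![2, 2, 2, 2], ![2, 2, 2, 2], ![1, 1, 1, 1], ![3, 3, 3, 3]]

/-!
The edge vectors `rᵢ - r₁` of the pentatope are the rows of `4 • 1 - (1 + √5) J` with `J` the
all-ones matrix, so the matrix determinant lemma gives `det = 4³ (4 - 4 (1 + √5)) = -256 √5`.
Cofactor expansion gives `det M0 = 73 √5`, and the `√5` cancels in `4 (256 √5 / 24) / (73 √5)`.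
-/

open Matrix

theorem Matrix.det_smul_one_add_vecMulVec {m 𝕜 : Type*} [Fintype m] [DecidableEq m] [Field 𝕜]
    {c : 𝕜} (hc : c ≠ 0) (u v : m → 𝕜) :
    (c • (1 : Matrix m m 𝕜) + vecMulVec u v).det = c ^ Fintype.card m * (1 + v ⬝ᵥ u / c) := by
  have : c • (1 : Matrix m m 𝕜) + vecMulVec u v = c • (1 + vecMulVec (c⁻¹ • u) v) := by
    rw [smul_add, smul_vecMulVec, smul_smul, mul_inv_cancel₀ hc, one_smul]
  rw [this, det_smul, vecMulVec_eq Unit, det_one_add_replicateCol_mul_replicateRow,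
    dotProduct_smul, smul_eq_mul, div_eq_inv_mul]

theorem pentD_eq_smul_one_add_vecMulVec :
    pentD = (4 : ℝ) • 1 + vecMulVec (fun _ => -(1 + √5)) 1 := by
  ext i j
  fin_cases i <;> fin_cases j <;>
    simp [pentD, pentR1, pentR2, pentR3, pentR4, pentR5, one_apply, vecHead, vecTail] <;> ring

theorem pentD_det : pentD.det = -256 * √5 := by
  rw [pentD_eq_smul_one_add_vecMulVec, det_smul_one_add_vecMulVec four_ne_zero]
  simp only [Fintype.card_fin, one_dotProduct, Finset.sum_const, Finset.card_univ, nsmul_eq_mul]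
  ring

theorem pentM0_det : pentM0.det = 73 * √5 := by
  rw [det_succ_row_zero]
  simp [Fin.sum_univ_succ, det_fin_three, pentM0, Fin.succAbove]
  ring

theorem pentatope_packing_density :
    4 * (|pentD.det| / 24) / |pentM0.det| = 128 / 219 := by
  have hsqrt5 : 0 < √5 := by positivity
  rw [pentD_det, pentM0_det, abs_of_neg (by linarith), abs_of_pos (by positivity)]
  field_simp
  ring
end

section
/- Let σ̄_1, …, σ̄_d > 0 with Π σ̄_i > V for some V > 0. Then the minimization problem: minimize Σ_i (σ_i - σ̄_i)^2 over σ_1, …, σ_d ≥ 0 subject to Π σ_i ≤ V, has a minimizer, and at any minimizer the constraint is active: Π σ_i = V. -/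
/-!
A minimizer exists because the objective is continuous and coercive and the feasible set is
closed and contains `0`. If a minimizer `σ` had `∏ σ i < V`, then moving `σ` a little towards
`σbar` would stay feasible and multiply the objective by `(1 - t) ^ 2 < 1`, so the objective
vanishes at `σ`, i.e. `σ = σbar`, contradicting `V < ∏ σbar i`.
-/

open Finset Filter Topology

section

variable {ι : Type*} [Fintype ι]

lemma dist_sq_le_sum_sq_sub (x y : ι → ℝ) : dist x y ^ 2 ≤ ∑ i, (x i - y i) ^ 2 := by
  have hdist : dist x y ≤ √(∑ i, (x i - y i) ^ 2) :=
    (dist_pi_le_iff (Real.sqrt_nonneg _)).2 fun i =>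
      Real.abs_le_sqrt (single_le_sum (fun j _ => sq_nonneg (x j - y j)) (mem_univ i))
  exact (Real.le_sqrt dist_nonneg (sum_nonneg fun i _ => sq_nonneg _)).1 hdist

lemma tendsto_sum_sq_sub_cocompact_atTop (y : ι → ℝ) :
    Tendsto (fun x : ι → ℝ => ∑ i, (x i - y i) ^ 2) (cocompact _) atTop :=
  tendsto_atTop_mono (fun x => dist_sq_le_sum_sq_sub x y)
    ((tendsto_pow_atTop two_ne_zero).comp (tendsto_dist_right_cocompact_atTop y))

lemma IsClosed.exists_forall_sum_sq_sub_le {s : Set (ι → ℝ)} (hs : IsClosed s)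
    (hne : s.Nonempty) (y : ι → ℝ) :
    ∃ x ∈ s, ∀ z ∈ s, ∑ i, (x i - y i) ^ 2 ≤ ∑ i, (z i - y i) ^ 2 := by
  obtain ⟨x₀, hx₀⟩ := hne
  have hcoercive : ∀ᶠ z in cocompact (ι → ℝ) ⊓ 𝓟 s,
      ∑ i, (x₀ i - y i) ^ 2 ≤ ∑ i, (z i - y i) ^ 2 :=
    ((tendsto_sum_sq_sub_cocompact_atTop y).eventually_ge_atTop _).filter_mono inf_le_left
  have hcont : Continuous fun z : ι → ℝ => ∑ i, (z i - y i) ^ 2 := by fun_prop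
  exact hcont.continuousOn.exists_isMinOn' hs hx₀ hcoercive

lemma sum_sq_convexComb_sub (x y : ι → ℝ) (t : ℝ) :
    ∑ i, (((1 - t) • x + t • y) i - y i) ^ 2 = (1 - t) ^ 2 * ∑ i, (x i - y i) ^ 2 := by
  rw [mul_sum]
  refine sum_congr rfl fun i _ => ?_
  simp only [Pi.add_apply, Pi.smul_apply, smul_eq_mul]
  ring

lemma eq_of_sum_sq_sub_le_convexComb {x y : ι → ℝ} {t : ℝ} (ht₀ : 0 < t) (ht₂ : t < 2)
    (hle : ∑ i, (x i - y i) ^ 2 ≤ ∑ i, (((1 - t) • x + t • y) i - y i) ^ 2) : x = y := by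
  rw [sum_sq_convexComb_sub] at hle
  have hfactor : (1 - t) ^ 2 < 1 := by nlinarith
  have hzero : ∑ i, (x i - y i) ^ 2 = 0 :=
    le_antisymm (by nlinarith [sum_nonneg fun i (_ : i ∈ univ) => sq_nonneg (x i - y i)])
      (sum_nonneg fun i _ => sq_nonneg _)
  rw [sum_eq_zero_iff_of_nonneg fun i _ => sq_nonneg _] at hzero
  exact funext fun i => sub_eq_zero.1 (pow_eq_zero_iff two_ne_zero |>.1 (hzero i (mem_univ i)))

lemma isClosed_setOf_nonneg_prod_le (V : ℝ) :
    IsClosed {σ : ι → ℝ | (∀ i, 0 ≤ σ i) ∧ ∏ i, σ i ≤ V} := by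
  simp only [Set.ofPred_and, Set.ofPred_forall]
  exact (isClosed_iInter fun i => isClosed_le continuous_const (continuous_apply i)).inter
    (isClosed_le (by fun_prop) continuous_const)

lemma exists_convexComb_prod_lt {σ σbar : ι → ℝ} {V : ℝ} (hlt : ∏ i, σ i < V) :
    ∃ t : ℝ, 0 < t ∧ t ≤ 1 ∧ ∏ i, ((1 - t) • σ + t • σbar) i < V := by
  have hcont : Continuous fun t : ℝ => ∏ i, ((1 - t) • σ + t • σbar) i := by
    simp only [Pi.add_apply, Pi.smul_apply, smul_eq_mul]
    fun_prop
  have hnear : ∀ᶠ t in 𝓝[>] (0 : ℝ), ∏ i, ((1 - t) • σ + t • σbar) i < V :=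
    nhdsWithin_le_nhds (hcont.continuousAt.eventually_lt continuousAt_const (by simpa using hlt))
  obtain ⟨t, hprod, ht₀, ht₁⟩ := (hnear.and (Ioc_mem_nhdsGT one_pos)).exists
  exact ⟨t, ht₀, ht₁, hprod⟩

lemma prod_eq_of_forall_sum_sq_sub_le {σbar : ι → ℝ} (hσbar : ∀ i, 0 ≤ σbar i) {V : ℝ}
    (hprod : V < ∏ i, σbar i) {σ : ι → ℝ} (hσ : ∀ i, 0 ≤ σ i) (hle : ∏ i, σ i ≤ V)
    (hmin : ∀ σ' : ι → ℝ, (∀ i, 0 ≤ σ' i) → ∏ i, σ' i ≤ V →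
      ∑ i, (σ i - σbar i) ^ 2 ≤ ∑ i, (σ' i - σbar i) ^ 2) :
    ∏ i, σ i = V := by
  by_contra hne
  obtain ⟨t, ht₀, ht₁, hprod'⟩ :=
    exists_convexComb_prod_lt (σbar := σbar) (lt_of_le_of_ne hle hne)
  have hnonneg : ∀ i, 0 ≤ ((1 - t) • σ + t • σbar) i := fun i => by
    simp only [Pi.add_apply, Pi.smul_apply, smul_eq_mul]
    exact add_nonneg (mul_nonneg (sub_nonneg.2 ht₁) (hσ i)) (mul_nonneg ht₀.le (hσbar i))
  have hσeq : σ = σbar :=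
    eq_of_sum_sq_sub_le_convexComb ht₀ (by linarith) (hmin _ hnonneg hprod'.le)
  subst hσeq
  linarith

end

theorem singular_value_projection_active_constraint (d : ℕ) (hd : 0 < d)
    (σbar : Fin d → ℝ) (hσbar : ∀ i, 0 < σbar i)
    (V : ℝ) (hV : 0 < V) (hprod : V < ∏ i, σbar i) :
    (∃ σ : Fin d → ℝ, (∀ i, 0 ≤ σ i) ∧ (∏ i, σ i) ≤ V ∧
      ∀ σ' : Fin d → ℝ, (∀ i, 0 ≤ σ' i) → (∏ i, σ' i) ≤ V →
        ∑ i, (σ i - σbar i) ^ 2 ≤ ∑ i, (σ' i - σbar i) ^ 2) ∧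
    (∀ σ : Fin d → ℝ, (∀ i, 0 ≤ σ i) → (∏ i, σ i) ≤ V →
      (∀ σ' : Fin d → ℝ, (∀ i, 0 ≤ σ' i) → (∏ i, σ' i) ≤ V →
        ∑ i, (σ i - σbar i) ^ 2 ≤ ∑ i, (σ' i - σbar i) ^ 2) →
      (∏ i, σ i) = V) := by
  refine ⟨?_, fun σ hσ hle hmin =>
    prod_eq_of_forall_sum_sq_sub_le (fun i => (hσbar i).le) hprod hσ hle hmin⟩
  have hzero : (0 : Fin d → ℝ) ∈ {σ : Fin d → ℝ | (∀ i, 0 ≤ σ i) ∧ ∏ i, σ i ≤ V} :=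
    ⟨fun _ => le_rfl, by rw [prod_eq_zero (mem_univ ⟨0, hd⟩) rfl]; exact hV.le⟩
  obtain ⟨σ, ⟨hσ, hle⟩, hmin⟩ :=
    (isClosed_setOf_nonneg_prod_le V).exists_forall_sum_sq_sub_le ⟨0, hzero⟩ σbar
  exact ⟨σ, hσ, hle, fun σ' hσ' hle' => hmin σ' ⟨hσ', hle'⟩⟩
end
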